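/- Define A_p(λ) := 2 sinc(1−λ) [1 + (1−λ)(ψ⁰(p−λ+1) − ψ⁰(2−λ))] for λ ∈ (0,1) and p ∈ ℕ, where sinc z = sin(πz)/(πz) and ψ⁰ is the digamma function. Then for all p ≥ 3 and all λ ∈ (0,1), (p+1) − A_{p+1}(λ) > p − A_p(λ). -/

import Mathlib

/-! The recurrence ψ⁰(x + 1) = ψ⁰(x) + 1/x collapses the difference of consecutive terms:
A_{p+1}(λ) − A_p(λ) = 2 sinc(1 − λ)(1 − λ)/(p + 1 − λ) = 2 sin(π(1 − λ))/(π(p + 1 − λ)),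
which is at most 2/π < 1 as soon as p ≥ 1. -/

/-- Normalized sinc: sinc z = sin(πz)/(πz), sinc 0 = 1. -/
noncomputable def sinc (z : ℝ) : ℝ :=
  if z = 0 then 1 else Real.sin (Real.pi * z) / (Real.pi * z)

/-- The digamma function ψ⁰ = (log Γ)'. -/
noncomputable def digamma (x : ℝ) : ℝ :=
  deriv (fun y : ℝ => Real.log (Real.Gamma y)) x

/-- A_p(λ) = 2 sinc(1−λ) [1 + (1−λ)(ψ⁰(p−λ+1) − ψ⁰(2−λ))]. -/
noncomputable def A (p : ℕ) (lam : ℝ) : ℝ :=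
  2 * sinc (1 - lam) * (1 + (1 - lam) * (digamma (p - lam + 1) - digamma (2 - lam)))

open Topology
open scoped Real

lemma digamma_add_one {x : ℝ} (hx : ∀ m : ℕ, x ≠ -m) : digamma (x + 1) = digamma x + x⁻¹ := by
  have hx0 : x ≠ 0 := by simpa using hx 0
  have hΓ : DifferentiableAt ℝ Real.Gamma x := Real.differentiableAt_Gamma hx
  have hΓx : Real.Gamma x ≠ 0 := Real.Gamma_ne_zero hx
  have hshift : digamma (x + 1) = deriv (fun y ↦ Real.log (Real.Gamma (y + 1))) x :=
    (deriv_comp_add_const (fun y ↦ Real.log (Real.Gamma y)) 1 x).symm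
  have hfun : (fun y ↦ Real.log (Real.Gamma (y + 1)))
      =ᶠ[𝓝 x] fun y ↦ Real.log y + Real.log (Real.Gamma y) := by
    filter_upwards [eventually_ne_nhds hx0, hΓ.continuousAt.eventually_ne hΓx] with y hy hΓy
    rw [Real.Gamma_add_one hy, Real.log_mul hy hΓy]
  rw [hshift, hfun.deriv_eq, deriv_fun_add (Real.differentiableAt_log hx0) (hΓ.log hΓx),
    Real.deriv_log, digamma, add_comm]

lemma pi_mul_mul_sinc (z : ℝ) : π * z * sinc z = Real.sin (π * z) := by
  rcases eq_or_ne z 0 with rfl | hz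
  · simp
  · rw [sinc, if_neg hz]
    field_simp

lemma A_succ_sub_A (p : ℕ) {lam : ℝ} (hlam : lam < p + 1) :
    A (p + 1) lam - A p lam = 2 * Real.sin (π * (1 - lam)) / (π * (p - lam + 1)) := by
  have hx : 0 < (p : ℝ) - lam + 1 := by linarith
  have hdigamma : digamma ((↑(p + 1) : ℝ) - lam + 1) =
      digamma ((p : ℝ) - lam + 1) + ((p : ℝ) - lam + 1)⁻¹ := by
    rw [← digamma_add_one fun m ↦ by linarith [(m.cast_nonneg : (0 : ℝ) ≤ m)]]
    push_cast
    ring_nf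
  rw [A, A, hdigamma, ← pi_mul_mul_sinc]
  field_simp
  ring

lemma A_succ_sub_A_lt_one {p : ℕ} (hp : 1 ≤ p) {lam : ℝ} (hlam : lam < 1) :
    A (p + 1) lam - A p lam < 1 := by
  have hp' : (1 : ℝ) ≤ p := by exact_mod_cast hp
  have hx : 1 < (p : ℝ) - lam + 1 := by linarith
  rw [A_succ_sub_A p (by linarith), div_lt_one (by positivity)]
  nlinarith [Real.sin_le_one (π * (1 - lam)), Real.pi_gt_three]

theorem A_monotonicity (p : ℕ) (hp : 3 ≤ p) (lam : ℝ) (hlam : lam ∈ Set.Ioo (0 : ℝ) 1) :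
    (p : ℝ) - A p lam < ((p : ℝ) + 1) - A (p + 1) lam := by
  linarith [A_succ_sub_A_lt_one (by omega : 1 ≤ p) hlam.2]
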